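/- Every matrix M ∈ SL_3(𝔽_7) whose characteristic polynomial is X^3 + 2X − 1 has order 19 as a group element. -/
import Mathlib

open Matrix Polynomial

abbrev SL3 := Matrix.SpecialLinearGroup (Fin 3) (ZMod 7)

theorem order_of_charpoly_02 (M : SL3)
    (h : M.val.charpoly = X ^ 3 + C (2 : ZMod 7) * X - 1) :
    orderOf M = 19 := by
  have h0 := Matrix.aeval_self_charpoly M.val
  rw [h] at h0
  simp only [map_sub, map_add, _root_.map_mul, map_pow, aeval_X, aeval_C, _root_.map_one,
    map_ofNat] at h0
  -- polynomial identity: X^19 - 1 = f * g over ZMod 7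
  have h70 : (7 : ZMod 7) = 0 := by decide
  have h7 : (7 : (ZMod 7)[X]) = 0 := by
    rw [← map_ofNat (C : ZMod 7 →+* (ZMod 7)[X]) 7, h70, map_zero]
  have key : (X ^ 19 - 1 : (ZMod 7)[X]) =
      (X ^ 3 + C (2 : ZMod 7) * X - 1) *
        (X ^ 16 + 5 * X ^ 14 + X ^ 13 + 4 * X ^ 12 + 3 * X ^ 11 + 5 * X ^ 9 + 3 * X ^ 8 +
          4 * X ^ 7 + 6 * X ^ 6 + 2 * X ^ 5 + 6 * X ^ 4 + 2 * X ^ 3 + 4 * X ^ 2 + 2 * X + 1) := by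
    simp only [map_ofNat]
    linear_combination (-(X ^ 17 + 2 * X ^ 15 + X ^ 13 + X ^ 12 + 2 * X ^ 10 + X ^ 9 + X ^ 8 +
      2 * X ^ 7 + 2 * X ^ 5 + X ^ 3 : (ZMod 7)[X])) * h7
  have h19m : M.val ^ 19 = 1 := by
    have h2 := congrArg (aeval M.val) key
    simp only [map_sub, map_add, _root_.map_mul, map_pow, aeval_X, aeval_C, _root_.map_one,
      map_ofNat] at h2
    rw [h0, zero_mul] at h2
    exact sub_eq_zero.mp h2
  have h19 : M ^ 19 = 1 := by
    apply Subtype.coe_injective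
    simpa using h19m
  have hne : M ≠ 1 := by
    intro hM
    have hv : M.val = 1 := by rw [hM]; rfl
    rw [hv] at h0
    norm_num at h0
    rw [← one_add_one_eq_two] at h0
    have h00 := congrFun (congrFun h0 0) 0
    simp only [Matrix.add_apply, Matrix.one_apply_eq, Matrix.zero_apply] at h00
    exact absurd h00 (by decide)
  haveI : Fact (Nat.Prime 19) := ⟨by norm_num⟩
  exact orderOf_eq_prime h19 hne
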